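/- Let F : ℝ × ℝⁿ → ℂ be smooth and nowhere zero and U : ℝⁿ → ℂ. If F satisfies the Schrödinger-type equation i b² ∂t F = -(b⁴/2) ∇²F + U F, then the vector field V = -i b² (∇F)/F satisfies the forced complex Burgers (stochastic geodesic) equation ∂t V + (V·∇)V - (i b²/2) ∇²V = -∇U, where (V·∇)V denotes the vector with components Σ_j V_j ∂_{x_j} V_k. -/

import Mathlib

/-- Time partial derivative of a complex-valued function on `ℝ × ℝⁿ`. -/
noncomputable def ptC {n : ℕ} (f : ℝ × (Fin n → ℝ) → ℂ) (p : ℝ × (Fin n → ℝ)) : ℂ :=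
  deriv (fun s => f (s, p.2)) p.1

/-- Spatial partial derivative in the `k`-th coordinate. -/
noncomputable def pdx {n : ℕ} (k : Fin n) (f : ℝ × (Fin n → ℝ) → ℂ)
    (p : ℝ × (Fin n → ℝ)) : ℂ :=
  deriv (fun s => f (p.1, Function.update p.2 k s)) (p.2 k)

/-- Spatial Laplacian. -/
noncomputable def lapC {n : ℕ} (f : ℝ × (Fin n → ℝ) → ℂ) (p : ℝ × (Fin n → ℝ)) : ℂ :=
  ∑ k, pdx k (pdx k f) p

/-- Partial derivative of the potential `U : ℝⁿ → ℂ`. -/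
noncomputable def pdU {n : ℕ} (k : Fin n) (U : (Fin n → ℝ) → ℂ) (x : Fin n → ℝ) : ℂ :=
  deriv (fun s => U (Function.update x k s)) (x k)

/-! With `c = -i b²`, the field `V = c ∇F / F` is the gradient of `S = c log F` (defined only
locally, but `∇F / F` is a closed form, so `V` is curl-free). Dividing the Schrödinger equation by
`F` gives the Hamilton–Jacobi equation `c ∂ₜF / F + ½ Σⱼ Vⱼ² + (c/2) ∇·V = -U`, and its `∂ₖ`
derivative is the Burgers equation: curl-freeness turns `Σⱼ Vⱼ ∂ⱼVₖ` into `∂ₖ (½ Σⱼ Vⱼ²)` and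
`∇²Vₖ` into `∂ₖ (∇·V)`, while `∂ₜVₖ = ∂ₖ (c ∂ₜF / F)` by the symmetry of second derivatives. -/

open Finset

section LogarithmicDerivative

variable {E 𝕂 : Type*} [NormedAddCommGroup E] [NormedSpace ℝ E]
  [NormedField 𝕂] [NormedAlgebra ℝ 𝕂]

theorem ContDiff.differentiable_fderiv_apply {G : Type*} [NormedAddCommGroup G]
    [NormedSpace ℝ G] {f : E → G} (hf : ContDiff ℝ 2 f) (u : E) :
    Differentiable ℝ (fderiv ℝ f · u) :=
  ((hf.fderiv_right (m := 1) le_rfl).differentiable one_ne_zero).clm_apply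
    (differentiable_const u)

theorem fderiv_fderiv_apply_comm {G : Type*} [NormedAddCommGroup G] [NormedSpace ℝ G]
    {f : E → G} {p : E} (hf : ContDiffAt ℝ 2 f p) (u v : E) :
    fderiv ℝ (fderiv ℝ f · u) p v = fderiv ℝ (fderiv ℝ f · v) p u := by
  have hd : DifferentiableAt ℝ (fderiv ℝ f) p :=
    (hf.fderiv_right (m := 1) le_rfl).differentiableAt one_ne_zero
  rw [fderiv_clm_apply hd (differentiableAt_const u),
    fderiv_clm_apply hd (differentiableAt_const v)]
  simpa using hf.isSymmSndFDerivAt (by simp) v u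

theorem fderiv_fun_div_apply {f g : E → 𝕂} {p : E} (hf : DifferentiableAt ℝ f p)
    (hg : DifferentiableAt ℝ g p) (hp : g p ≠ 0) (v : E) :
    fderiv ℝ (fun q => f q / g q) p v
      = (fderiv ℝ f p v * g p - f p * fderiv ℝ g p v) / g p ^ 2 := by
  have hinv : HasFDerivAt (fun q => (g q)⁻¹)
      ((-ContinuousLinearMap.mulLeftRight ℝ 𝕂 (g p)⁻¹ (g p)⁻¹).comp (fderiv ℝ g p)) p :=
    (hasFDerivAt_inv' hp).comp p hg.hasFDerivAt
  simp only [div_eq_mul_inv]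
  rw [(hf.hasFDerivAt.fun_mul hinv).fderiv]
  simp only [ContinuousLinearMap.neg_comp, smul_neg, add_apply, neg_apply, smul_apply,
    ContinuousLinearMap.comp_apply, ContinuousLinearMap.mulLeftRight_apply, smul_eq_mul]
  field_simp
  ring

theorem ContDiffAt.fderiv_apply_div_self {f : E → 𝕂} {p : E} {m : ℕ}
    (hf : ContDiffAt ℝ (m + 1) f p) (hp : f p ≠ 0) (u : E) :
    ContDiffAt ℝ m (fun q => fderiv ℝ f q u / f q) p := by
  simp only [div_eq_mul_inv]
  exact ((hf.fderiv_right le_rfl).clm_apply contDiffAt_const).mul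
    ((hf.of_le (by simp)).inv hp)

theorem fderiv_logDeriv_apply {f : E → 𝕂} {p : E} (hf : ContDiffAt ℝ 2 f p) (hp : f p ≠ 0)
    (u v : E) :
    fderiv ℝ (fun q => fderiv ℝ f q u / f q) p v
      = fderiv ℝ (fderiv ℝ f · u) p v / f p
        - fderiv ℝ f p u / f p * (fderiv ℝ f p v / f p) := by
  have hdu : DifferentiableAt ℝ (fderiv ℝ f · u) p :=
    ((hf.fderiv_right (m := 1) le_rfl).differentiableAt one_ne_zero).clm_apply
      (differentiableAt_const u)
  rw [fderiv_fun_div_apply hdu (hf.differentiableAt two_ne_zero) hp]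
  field_simp

theorem fderiv_const_mul_logDeriv_apply_comm {f : E → 𝕂} {p : E} (hf : ContDiffAt ℝ 2 f p)
    (hp : f p ≠ 0) (c : 𝕂) (u v : E) :
    fderiv ℝ (fun q => c * (fderiv ℝ f q u / f q)) p v
      = fderiv ℝ (fun q => c * (fderiv ℝ f q v / f q)) p u := by
  have hd : ∀ w, DifferentiableAt ℝ (fun q => fderiv ℝ f q w / f q) p := fun w =>
    (hf.fderiv_apply_div_self (m := 1) hp w).differentiableAt one_ne_zero
  rw [fderiv_const_mul (hd u), fderiv_const_mul (hd v), smul_apply, smul_apply,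
    fderiv_logDeriv_apply hf hp, fderiv_logDeriv_apply hf hp, fderiv_fderiv_apply_comm hf,
    mul_comm (fderiv ℝ f p u / f p)]

end LogarithmicDerivative

section CurlFree

variable {E 𝕂 ι : Type*} [NormedAddCommGroup E] [NormedSpace ℝ E] [RCLike 𝕂] [Fintype ι]

def IsCurlFree (V : ι → E → 𝕂) (e : ι → E) : Prop :=
  ∀ i j q, fderiv ℝ (V i) q (e j) = fderiv ℝ (V j) q (e i)

variable {V : ι → E → 𝕂} {e : ι → E}

theorem IsCurlFree.fderiv_sum_sq (hcurl : IsCurlFree V e) {p : E}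
    (hV : ∀ j, DifferentiableAt ℝ (V j) p) (k : ι) :
    fderiv ℝ (fun q => ∑ j, V j q ^ 2) p (e k) = 2 * ∑ j, V j p * fderiv ℝ (V k) p (e j) := by
  rw [fderiv_fun_sum fun j _ => (hV j).fun_pow 2]
  simp [fderiv_fun_pow, hV, hcurl k _ p, mul_sum, mul_assoc]

theorem IsCurlFree.sum_fderiv_fderiv_eq_fderiv_sum (hcurl : IsCurlFree V e)
    (hV : ∀ j, ContDiff ℝ 2 (V j)) (k : ι) (p : E) :
    ∑ j, fderiv ℝ (fderiv ℝ (V k) · (e j)) p (e j)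
      = fderiv ℝ (fun q => ∑ j, fderiv ℝ (V j) q (e j)) p (e k) := by
  rw [fderiv_fun_sum fun j _ => (hV j).differentiable_fderiv_apply (e j) p]
  simp only [FunLike.coe_sum, Finset.sum_apply]
  refine sum_congr rfl fun j _ => ?_
  rw [fderiv_fderiv_apply_comm (hV j).contDiffAt, funext (hcurl j k)]

theorem IsCurlFree.hasLineDerivAt_hamiltonJacobi (hcurl : IsCurlFree V e)
    (hV : ∀ j, ContDiff ℝ 2 (V j)) {Θ : E → 𝕂} {p w : E} (hΘ : DifferentiableAt ℝ Θ p)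
    {k : ι} (htime : fderiv ℝ (V k) p w = fderiv ℝ Θ p (e k)) (a : 𝕂) :
    HasLineDerivAt ℝ (fun q => Θ q + (∑ j, V j q ^ 2) / 2 + a * ∑ j, fderiv ℝ (V j) q (e j))
      (fderiv ℝ (V k) p w + ∑ j, V j p * fderiv ℝ (V k) p (e j)
        + a * ∑ j, fderiv ℝ (fderiv ℝ (V k) · (e j)) p (e j)) p (e k) := by
  have hV1 : ∀ j, Differentiable ℝ (V j) := fun j => (hV j).differentiable two_ne_zero
  have hdV : ∀ j, Differentiable ℝ (fderiv ℝ (V j) · (e j)) := fun j =>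
    (hV j).differentiable_fderiv_apply (e j)
  have hsq : DifferentiableAt ℝ (fun q => ∑ j, V j q ^ 2) p := by fun_prop
  have hsdiv : DifferentiableAt ℝ (fun q => ∑ j, fderiv ℝ (V j) q (e j)) p := by fun_prop
  have hΦ : DifferentiableAt ℝ
      (fun q => Θ q + (∑ j, V j q ^ 2) / 2 + a * ∑ j, fderiv ℝ (V j) q (e j)) p := by fun_prop
  convert hΦ.hasFDerivAt.hasLineDerivAt (e k) using 1
  simp only [div_eq_mul_inv]
  rw [fderiv_fun_add (by fun_prop) (hsdiv.const_mul a), fderiv_fun_add hΘ (by fun_prop),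
    fderiv_const_mul hsdiv, fderiv_mul_const hsq]
  simp only [add_apply, smul_apply, smul_eq_mul]
  rw [htime, hcurl.fderiv_sum_sq (fun j => hV1 j p), hcurl.sum_fderiv_fderiv_eq_fderiv_sum hV]
  ring

end CurlFree

section SpaceTime

variable {n : ℕ}

def timeDir (n : ℕ) : ℝ × (Fin n → ℝ) := (1, 0)

def spaceDir (k : Fin n) : ℝ × (Fin n → ℝ) := (0, Pi.single k 1)

theorem ptC_eq_fderiv {f : ℝ × (Fin n → ℝ) → ℂ} {p : ℝ × (Fin n → ℝ)}
    (hf : DifferentiableAt ℝ f p) : ptC f p = fderiv ℝ f p (timeDir n) :=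
  (hf.hasFDerivAt.comp_hasDerivAt p.1
    ((hasDerivAt_id p.1).prodMk (hasDerivAt_const p.1 p.2))).deriv

theorem HasLineDerivAt.pdx_eq {f : ℝ × (Fin n → ℝ) → ℂ} {f' : ℂ} {p : ℝ × (Fin n → ℝ)}
    {k : Fin n} (hf : HasLineDerivAt ℝ f f' p (spaceDir k)) : pdx k f p = f' := by
  have hline : (fun s => f (p.1, Function.update p.2 k s))
      = fun s => f (p + (s - p.2 k) • spaceDir k) := by
    funext s
    congr 1
    ext i
    · simp [spaceDir]
    · by_cases hi : i = k
      · subst hi; simp [spaceDir]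
      · simp [spaceDir, hi]
  have hf0 : HasDerivAt (fun t => f (p + t • spaceDir k)) f' (p.2 k - p.2 k) := by
    rw [sub_self]
    exact hf
  rw [pdx, hline]
  exact (hf0.comp_sub_const _ _).deriv

theorem pdx_eq_fderiv {f : ℝ × (Fin n → ℝ) → ℂ} {p : ℝ × (Fin n → ℝ)}
    (hf : DifferentiableAt ℝ f p) (k : Fin n) : pdx k f p = fderiv ℝ f p (spaceDir k) :=
  (hf.hasFDerivAt.hasLineDerivAt _).pdx_eq

theorem lapC_eq_sum_fderiv {f : ℝ × (Fin n → ℝ) → ℂ} (hf : ContDiff ℝ 2 f)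
    (p : ℝ × (Fin n → ℝ)) :
    lapC f p = ∑ j, fderiv ℝ (fderiv ℝ f · (spaceDir j)) p (spaceDir j) := by
  refine sum_congr rfl fun j _ => ?_
  rw [funext fun q => pdx_eq_fderiv (hf.differentiable two_ne_zero q) j,
    pdx_eq_fderiv (hf.differentiable_fderiv_apply _ p)]

end SpaceTime

theorem hamiltonJacobi_of_schrodinger {n : ℕ} {F : ℝ × (Fin n → ℝ) → ℂ}
    {U : (Fin n → ℝ) → ℂ} {b : ℝ} {V : Fin n → ℝ × (Fin n → ℝ) → ℂ} {q : ℝ × (Fin n → ℝ)}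
    (hF : ContDiff ℝ 2 F) (hq : F q ≠ 0)
    (schrod : Complex.I * (b : ℂ)^2 * ptC F q = -((b : ℂ)^4 / 2) * lapC F q + U q.2 * F q)
    (hV : ∀ j, V j = fun r => -Complex.I * (b : ℂ)^2 * (fderiv ℝ F r (spaceDir j) / F r)) :
    -Complex.I * (b : ℂ)^2 * (fderiv ℝ F q (timeDir n) / F q) + (∑ j, V j q ^ 2) / 2
      + -(Complex.I * (b : ℂ)^2 / 2) * ∑ j, fderiv ℝ (V j) q (spaceDir j) = -U q.2 := by
  have hdiv : ∀ j, fderiv ℝ (V j) q (spaceDir j) = -Complex.I * (b : ℂ)^2 *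
      (fderiv ℝ (fderiv ℝ F · (spaceDir j)) q (spaceDir j) / F q
        - (fderiv ℝ F q (spaceDir j) / F q) ^ 2) := by
    intro j
    rw [hV, fderiv_const_mul
      ((hF.contDiffAt.fderiv_apply_div_self (m := 1) hq _).differentiableAt one_ne_zero),
      smul_apply, fderiv_logDeriv_apply hF.contDiffAt hq, smul_eq_mul]
    ring
  have hsum : (∑ j, V j q ^ 2) / 2 + -(Complex.I * (b : ℂ)^2 / 2)
      * ∑ j, fderiv ℝ (V j) q (spaceDir j) = -((b : ℂ)^4 / 2) * lapC F q / F q := by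
    rw [lapC_eq_sum_fderiv hF, sum_div, mul_sum, mul_sum, sum_div, ← sum_add_distrib]
    refine sum_congr rfl fun j _ => ?_
    rw [hdiv, hV]
    linear_combination (b : ℂ)^4 / 2 * (fderiv ℝ (fderiv ℝ F · (spaceDir j)) q (spaceDir j) / F q)
      * Complex.I_sq
  rw [add_assoc, hsum, ← ptC_eq_fderiv (hF.differentiable two_ne_zero q)]
  field_simp
  linear_combination (-2) * schrod

theorem forced_complex_burgers_of_schrodinger_general {n : ℕ}
    (F : ℝ × (Fin n → ℝ) → ℂ) (hF : ContDiff ℝ 3 F) (hne : ∀ p, F p ≠ 0)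
    (b : ℝ)
    (U : (Fin n → ℝ) → ℂ)
    (schrod : ∀ p, Complex.I * (b : ℂ)^2 * ptC F p
        = -((b : ℂ)^4 / 2) * lapC F p + U p.2 * F p)
    (V : Fin n → ℝ × (Fin n → ℝ) → ℂ)
    (hV : ∀ k p, V k p = -Complex.I * (b : ℂ)^2 * pdx k F p / F p) :
    ∀ (k : Fin n) (p : ℝ × (Fin n → ℝ)),
      ptC (V k) p + (∑ j, V j p * pdx j (V k) p)
        - (Complex.I * (b : ℂ)^2 / 2) * lapC (V k) p = -pdU k U p.2 := by
  intro k p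
  have hF2 : ContDiff ℝ 2 F := hF.of_le (by norm_num)
  have hL : ∀ u, ContDiff ℝ 2 (fun q => fderiv ℝ F q u / F q) := fun u =>
    contDiff_iff_contDiffAt.2 fun q => hF.contDiffAt.fderiv_apply_div_self (hne q) u
  have hVL : ∀ j, V j = fun q => -Complex.I * (b : ℂ)^2 * (fderiv ℝ F q (spaceDir j) / F q) :=
    fun j => funext fun q => by
      rw [hV, pdx_eq_fderiv (hF2.differentiable two_ne_zero q), mul_div_assoc]
  have hV2 : ∀ j, ContDiff ℝ 2 (V j) := fun j => hVL j ▸ contDiff_const.mul (hL _)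
  have hcurl : IsCurlFree V spaceDir := fun i j q => by
    rw [hVL, hVL]
    exact fderiv_const_mul_logDeriv_apply_comm hF2.contDiffAt (hne q) _ _ _
  have htime : fderiv ℝ (V k) p (timeDir n) = fderiv ℝ
      (fun q => -Complex.I * (b : ℂ)^2 * (fderiv ℝ F q (timeDir n) / F q)) p (spaceDir k) := by
    rw [hVL]
    exact fderiv_const_mul_logDeriv_apply_comm hF2.contDiffAt (hne p) _ _ _
  have hHJ := hcurl.hasLineDerivAt_hamiltonJacobi hV2
    (((hL _).differentiable two_ne_zero p).const_mul _) htime (-(Complex.I * (b : ℂ)^2 / 2))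
  rw [funext fun q => hamiltonJacobi_of_schrodinger hF2 (hne q) (schrod q) hVL] at hHJ
  have hdVk := (hV2 k).differentiable two_ne_zero p
  rw [show -pdU k U p.2 = pdx k (fun q => -U q.2) p from deriv.fun_neg.symm, hHJ.pdx_eq,
    ptC_eq_fderiv hdVk, lapC_eq_sum_fderiv (hV2 k)]
  simp only [pdx_eq_fderiv hdVk]
  ring

/-- If `F` solves the Schrödinger-type equation `i b² ∂t F = -(b⁴/2) ∇²F + U F`,
then `V = -i b² ∇F / F` solves the forced complex Burgers (stochastic geodesic)
equation `∂t V + (V·∇)V - (i b²/2) ∇²V = -∇U`. -/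
theorem forced_complex_burgers_of_schrodinger {n : ℕ}
    (F : ℝ × (Fin n → ℝ) → ℂ) (hF : ContDiff ℝ 3 F) (hne : ∀ p, F p ≠ 0)
    (b : ℝ) (hb : 0 < b)
    (U : (Fin n → ℝ) → ℂ) (hU : Differentiable ℝ U)
    (schrod : ∀ p, Complex.I * (b : ℂ)^2 * ptC F p
        = -((b : ℂ)^4 / 2) * lapC F p + U p.2 * F p)
    (V : Fin n → ℝ × (Fin n → ℝ) → ℂ)
    (hV : ∀ k p, V k p = -Complex.I * (b : ℂ)^2 * pdx k F p / F p) :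
    ∀ (k : Fin n) (p : ℝ × (Fin n → ℝ)),
      ptC (V k) p + (∑ j, V j p * pdx j (V k) p)
        - (Complex.I * (b : ℂ)^2 / 2) * lapC (V k) p = -pdU k U p.2 :=
  forced_complex_burgers_of_schrodinger_general F hF hne b U schrod V hV
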